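/- Let Σ be an unsatisfiable set of clauses with w(Σ) ≤ k. If there is no regular resolution refutation of Σ of width at most k, then there exists a regular extendible (k+1)-family of extended assignments for Σ. -/

import Mathlib

attribute [local instance] Classical.propDecidable

/-- A clause: a finite set of literals, a literal being a variable with a sign. -/
abbrev Clause := Finset (ℕ × Bool)

/-- A total truth assignment satisfies a clause if it makes some literal true. -/
def clauseSat (a : ℕ → Bool) (C : Clause) : Prop :=
  ∃ l ∈ C, (if l.2 then a l.1 else !(a l.1)) = true

/-- A set of clauses is unsatisfiable (contradictory). -/
def Unsat (S : Set Clause) : Prop := ∀ a : ℕ → Bool, ¬ ∀ C ∈ S, clauseSat a C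

/-- The variables occurring in a set of clauses. -/
def varsOf (S : Set Clause) : Set ℕ := {x | ∃ C ∈ S, ∃ b, (x, b) ∈ C}

/-- The resolventCl of C and D upon the variable x. -/
def resolventCl (C D : Clause) (x : ℕ) : Clause := C.erase (x, true) ∪ D.erase (x, false)

/-- A (general, dag-like) resolution derivation from S: a sequence of clauses each of
which is a clause of S or a resolventCl of two earlier clauses. -/
def IsDerivation (S : Set Clause) (L : List Clause) : Prop :=
  ∀ i < L.length, L.getD i ∅ ∈ S ∨
    ∃ j < i, ∃ k < i, ∃ x : ℕ,
      (x, true) ∈ L.getD j ∅ ∧ (x, false) ∈ L.getD k ∅ ∧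
      L.getD i ∅ = resolventCl (L.getD j ∅) (L.getD k ∅) x

/-- A resolution refutation of S: a derivation from S containing the empty clause. -/
def IsRefutation (S : Set Clause) (L : List Clause) : Prop :=
  IsDerivation S L ∧ (∅ : Clause) ∈ L

/-- A partial assignment, presented as a functional finite set of (variable, value)
pairs; its cardinality is the number of assigned variables. -/
def Functional (α : Finset (ℕ × Bool)) : Prop :=
  ∀ x b b', (x, b) ∈ α → (x, b') ∈ α → b = b'

/-- A partial assignment falsifies a clause if it sets every literal of it false. -/
def Falsifies (α : Finset (ℕ × Bool)) (C : Clause) : Prop := ∀ l ∈ C, (l.1, !l.2) ∈ α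

/-- An extendible k-family for S: a nonempty family of partial assignments, none
falsifying a clause of S, each of size at most k, closed under subassignments, and
such that any member of size < k can be extended inside the family so as to assign
any given variable of S. -/
def ExtFamily (S : Set Clause) (k : ℕ) (A : Set (Finset (ℕ × Bool))) : Prop :=
  A.Nonempty ∧
  (∀ α ∈ A, Functional α) ∧
  (∀ α ∈ A, ∀ C ∈ S, ¬ Falsifies α C) ∧
  (∀ α ∈ A, α.card ≤ k) ∧
  (∀ α ∈ A, ∀ β ⊆ α, β ∈ A) ∧
  (∀ α ∈ A, α.card < k → ∀ x ∈ varsOf S, ∃ β ∈ A, α ⊆ β ∧ ∃ b, (x, b) ∈ β)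

/-- Tree-style resolution derivations: a binary tree whose leaves are (occurrences of)
input clauses and whose internal nodes are resolution inferences on a stated variable. -/
inductive RTree where
  | leaf : Clause → RTree
  | node : ℕ → RTree → RTree → RTree

/-- Conclusion clause of a resolution tree. -/
def conc : RTree → Clause
  | .leaf C => C
  | .node x l r => (conc l).erase (x, true) ∪ (conc r).erase (x, false)

/-- Validity: leaves are clauses of S, and each step resolves a variable occurring
positively in the left premiss and negatively in the right premiss. -/
def valid (S : Set Clause) : RTree → Prop
  | .leaf C => C ∈ S
  | .node x l r => (x, true) ∈ conc l ∧ (x, false) ∈ conc r ∧ valid S l ∧ valid S r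

/-- Size: the number of clause occurrences. -/
def tsize : RTree → ℕ
  | .leaf _ => 1
  | .node _ l r => tsize l + tsize r + 1

/-- Width: the maximum width of a clause occurring in the tree. -/
def twidth : RTree → ℕ
  | .leaf C => C.card
  | .node x l r => max (conc (RTree.node x l r)).card (max (twidth l) (twidth r))

/-- The variables resolved upon in a tree. -/
def resolvedVars : RTree → Finset ℕ
  | .leaf _ => ∅
  | .node x l r => insert x (resolvedVars l ∪ resolvedVars r)

/-- Regularity: no variable is resolved upon twice along any path. -/
def regular : RTree → Prop
  | .leaf _ => True
  | .node x l r => x ∉ resolvedVars l ∧ x ∉ resolvedVars r ∧ regular l ∧ regular r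

/-- A tree-style resolution refutation of S. -/
def IsTreeRefutation (S : Set Clause) (t : RTree) : Prop := valid S t ∧ conc t = ∅

/-- S has a regular resolution refutation of width at most k.  (Regular refutations
unfold, width for width, into regular tree-style refutations, so regular refutation
width is captured by regular trees.) -/
def HasRegularRefutationOfWidth (S : Set Clause) (k : ℕ) : Prop :=
  ∃ t : RTree, IsTreeRefutation S t ∧ regular t ∧ twidth t ≤ k

/-- The four states of a variable in an extended assignment. -/
inductive XVal | pos | neg | star | box
deriving DecidableEq

/-- An extended assignment. -/
def XAssign := ℕ → XVal

/-- A variable is live if it is assigned 0 or 1. -/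
def live (α : XAssign) (x : ℕ) : Prop := α x = XVal.pos ∨ α x = XVal.neg

/-- An extended assignment falsifies a clause if it sets every literal of it false. -/
def XFalsifies (α : XAssign) (C : Clause) : Prop :=
  ∀ l ∈ C, α l.1 = (if l.2 then XVal.neg else XVal.pos)

/-- β ⊑ α : β results from α by forgetting some live variables. -/
def ForgetOf (β α : XAssign) : Prop :=
  ∀ x, β x = α x ∨ (live α x ∧ β x = XVal.box)

/-- α ⊆ β : β results from α by making some unassigned variables live. -/
def ExtOf (α β : XAssign) : Prop :=
  ∀ x, α x = β x ∨ (α x = XVal.star ∧ live β x)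

/-- A regular extendible k-family for S: a family of extended assignments containing
the everywhere-unassigned assignment, none falsifying a clause of S, each with at most
k live variables, closed under forgetting, and such that any member with fewer than k
live variables can be extended inside the family so as to assign any given variable of
S that it leaves unassigned (∗). -/
def RegExtFamily (S : Set Clause) (k : ℕ) (A : Set XAssign) : Prop :=
  (fun _ => XVal.star) ∈ A ∧
  (∀ α ∈ A, ∀ C ∈ S, ¬ XFalsifies α C) ∧
  (∀ α ∈ A, {x | live α x}.Finite ∧ {x | live α x}.ncard ≤ k) ∧
  (∀ α ∈ A, ∀ β : XAssign, ForgetOf β α → β ∈ A) ∧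
  (∀ α ∈ A, {x | live α x}.ncard < k → ∀ x ∈ varsOf S, α x = XVal.star →
    ∃ β ∈ A, ExtOf α β ∧ live β x)

/-!
Call an extended assignment α *refuted* if some regular tree derivation of width at most `k`
concludes a clause falsified by α while resolving only on variables that α leaves unassigned.
The family consists of the unrefuted assignments with at most `k + 1` live variables.
The everywhere-unassigned assignment is unrefuted, since a tree refuting it derives the empty
clause. Forgetting cannot create a refutation: a forgotten variable neither falsifies a literal
nor may be resolved on. For the extension property, let α be unrefuted with at most `k` live
variables and `α x = ∗`. If both ways of setting `x` were refuted, both trees would have to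
contain the `x`-literal falsified by the new value (otherwise they would refute α itself), and
resolving them on `x` would refute α: the resolvent is falsified by α, so its width is at most
`k`, and `x` is resolved on in neither subtree because it was live there.
-/

def falsifyingVal (b : Bool) : XVal := if b then XVal.neg else XVal.pos

lemma falsifyingVal_injective : Function.Injective falsifyingVal := by
  intro a b
  cases a <;> cases b <;> simp [falsifyingVal]

@[simp] lemma falsifyingVal_ne_star (b : Bool) : falsifyingVal b ≠ XVal.star := by
  cases b <;> simp [falsifyingVal]

@[simp] lemma falsifyingVal_ne_box (b : Bool) : falsifyingVal b ≠ XVal.box := by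
  cases b <;> simp [falsifyingVal]

lemma live_iff_exists_falsifyingVal {α : XAssign} {x : ℕ} :
    live α x ↔ ∃ b, α x = falsifyingVal b := by
  constructor
  · rintro (h | h)
    exacts [⟨false, h⟩, ⟨true, h⟩]
  · rintro ⟨b, h⟩
    cases b
    exacts [Or.inl h, Or.inr h]

namespace XAssign

variable {α : XAssign} {x y : ℕ} {v : XVal}

def update (α : XAssign) (x : ℕ) (v : XVal) : XAssign := fun y => if y = x then v else α y

@[simp] lemma update_self : α.update x v x = v := if_pos rfl

lemma update_of_ne (h : y ≠ x) : α.update x v y = α y := if_neg h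

lemma setOf_live_update_subset :
    {y | live (α.update x v) y} ⊆ insert x {y | live α y} := by
  intro y hy
  by_cases hyx : y = x
  · exact Or.inl hyx
  · exact Or.inr (by simpa [live, update_of_ne hyx] using hy)

lemma ncard_live_update_le (hfin : {y | live α y}.Finite) :
    {y | live (α.update x v) y}.ncard ≤ {y | live α y}.ncard + 1 :=
  (Set.ncard_le_ncard setOf_live_update_subset (hfin.insert x)).trans (Set.ncard_insert_le x _)

lemma extOf_update (hx : α x = XVal.star) (hv : live (α.update x v) x) :
    ExtOf α (α.update x v) := by
  intro y
  by_cases hyx : y = x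
  · subst hyx
    exact Or.inr ⟨hx, hv⟩
  · exact Or.inl (update_of_ne hyx).symm

lemma live_update_falsifyingVal (b : Bool) :
    live (α.update x (falsifyingVal b)) x :=
  live_iff_exists_falsifyingVal.2 ⟨b, update_self⟩

lemma ne_and_eq_star_of_update_falsifyingVal {b : Bool}
    (h : α.update x (falsifyingVal b) y = XVal.star) : y ≠ x ∧ α y = XVal.star := by
  have hyx : y ≠ x := by
    rintro rfl
    simp at h
  exact ⟨hyx, by rwa [update_of_ne hyx] at h⟩

end XAssign

namespace ForgetOf

variable {α β : XAssign}

lemma setOf_live_subset (h : ForgetOf β α) : {x | live β x} ⊆ {x | live α x} := by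
  intro y hy
  rcases h y with heq | ⟨-, hbox⟩
  · simpa [live, heq] using hy
  · simp [live, hbox] at hy

lemma eq_of_eq_falsifyingVal (h : ForgetOf β α) {x : ℕ} {b : Bool}
    (hx : β x = falsifyingVal b) : α x = falsifyingVal b := by
  rcases h x with heq | ⟨-, hbox⟩
  · rwa [← heq]
  · rw [hbox] at hx
    exact absurd hx.symm (falsifyingVal_ne_box b)

lemma eq_star (h : ForgetOf β α) {x : ℕ} (hx : β x = XVal.star) : α x = XVal.star := by
  rcases h x with heq | ⟨-, hbox⟩
  · rwa [← heq]
  · simp [hbox] at hx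

end ForgetOf

namespace XFalsifies

variable {α β : XAssign} {C D : Clause}

lemma card_le_ncard_live (hf : XFalsifies α C) (hfin : {x | live α x}.Finite) :
    C.card ≤ {x | live α x}.ncard := by
  rw [← Set.ncard_coe_finset]
  refine Set.ncard_le_ncard_of_injOn Prod.fst
    (fun l hl => live_iff_exists_falsifyingVal.2 ⟨l.2, hf l hl⟩) ?_ hfin
  intro l hl l' hl' hfst
  have hl : α l.1 = falsifyingVal l.2 := hf l hl
  have hl' : α l'.1 = falsifyingVal l'.2 := hf l' hl'
  have hsnd : falsifyingVal l.2 = falsifyingVal l'.2 := by rw [← hl, ← hl', hfst]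
  exact Prod.ext hfst (falsifyingVal_injective hsnd)

lemma union (hC : XFalsifies α C) (hD : XFalsifies α D) : XFalsifies α (C ∪ D) := by
  intro l hl
  rcases Finset.mem_union.1 hl with hl | hl
  exacts [hC l hl, hD l hl]

lemma of_forgetOf (h : ForgetOf β α) (hf : XFalsifies β C) : XFalsifies α C :=
  fun l hl => h.eq_of_eq_falsifyingVal (hf l hl)

lemma erase_of_update {x : ℕ} {b : Bool}
    (hf : XFalsifies (α.update x (falsifyingVal b)) C) :
    XFalsifies α (C.erase (x, b)) := by
  intro l hl
  obtain ⟨hne, hl⟩ := Finset.mem_erase.1 hl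
  have hfl : α.update x (falsifyingVal b) l.1 = falsifyingVal l.2 := hf l hl
  have hlx : l.1 ≠ x := by
    intro hlx
    rw [hlx, XAssign.update_self] at hfl
    exact hne (Prod.ext hlx (falsifyingVal_injective hfl).symm)
  rwa [XAssign.update_of_ne hlx] at hfl

end XFalsifies

def NarrowRegularlyRefuted (S : Set Clause) (k : ℕ) (α : XAssign) : Prop :=
  ∃ t : RTree, valid S t ∧ regular t ∧ twidth t ≤ k ∧ XFalsifies α (conc t) ∧
    ∀ y ∈ resolvedVars t, α y = XVal.star

namespace NarrowRegularlyRefuted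

variable {S : Set Clause} {k : ℕ} {α β : XAssign}

lemma of_forgetOf (h : ForgetOf β α) (hβ : NarrowRegularlyRefuted S k β) :
    NarrowRegularlyRefuted S k α := by
  obtain ⟨t, hv, hr, htw, hf, hres⟩ := hβ
  exact ⟨t, hv, hr, htw, hf.of_forgetOf h, fun y hy => h.eq_star (hres y hy)⟩

lemma mem_conc_of_update (hα : ¬ NarrowRegularlyRefuted S k α) {x : ℕ} {b : Bool} {t : RTree}
    (hv : valid S t) (hr : regular t) (htw : twidth t ≤ k)
    (hf : XFalsifies (α.update x (falsifyingVal b)) (conc t))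
    (hres : ∀ y ∈ resolvedVars t, α.update x (falsifyingVal b) y = XVal.star) :
    (x, b) ∈ conc t := by
  by_contra hx
  refine hα ⟨t, hv, hr, htw, ?_,
    fun y hy => (XAssign.ne_and_eq_star_of_update_falsifyingVal (hres y hy)).2⟩
  simpa [Finset.erase_eq_of_notMem hx] using hf.erase_of_update

lemma of_update_falsifyingVal {x : ℕ} (hx : α x = XVal.star) (hfin : {y | live α y}.Finite)
    (hcard : {y | live α y}.ncard ≤ k)
    (htrue : NarrowRegularlyRefuted S k (α.update x (falsifyingVal true)))
    (hfalse : NarrowRegularlyRefuted S k (α.update x (falsifyingVal false))) :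
    NarrowRegularlyRefuted S k α := by
  by_contra hα
  obtain ⟨l, hvl, hrl, htwl, hfl, hresl⟩ := htrue
  obtain ⟨r, hvr, hrr, htwr, hfr, hresr⟩ := hfalse
  have hresl' := fun y hy => XAssign.ne_and_eq_star_of_update_falsifyingVal (hresl y hy)
  have hresr' := fun y hy => XAssign.ne_and_eq_star_of_update_falsifyingVal (hresr y hy)
  have hf : XFalsifies α (conc (.node x l r)) := hfl.erase_of_update.union hfr.erase_of_update
  refine hα ⟨.node x l r, ⟨mem_conc_of_update hα hvl hrl htwl hfl hresl,
    mem_conc_of_update hα hvr hrr htwr hfr hresr, hvl, hvr⟩,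
    ⟨fun hxl => (hresl' x hxl).1 rfl, fun hxr => (hresr' x hxr).1 rfl, hrl, hrr⟩,
    max_le ((hf.card_le_ncard_live hfin).trans hcard) (max_le htwl htwr), hf, ?_⟩
  intro y hy
  rcases Finset.mem_insert.1 hy with rfl | hy
  · exact hx
  · rcases Finset.mem_union.1 hy with hy | hy
    exacts [(hresl' y hy).2, (hresr' y hy).2]

end NarrowRegularlyRefuted

def unrefutedFamily (S : Set Clause) (k : ℕ) : Set XAssign :=
  {α | {x | live α x}.Finite ∧ {x | live α x}.ncard ≤ k + 1 ∧
    ¬ NarrowRegularlyRefuted S k α}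

namespace unrefutedFamily

variable {S : Set Clause} {k : ℕ} {α β : XAssign}

lemma star_mem (h : ¬ HasRegularRefutationOfWidth S k) :
    (fun _ => XVal.star) ∈ unrefutedFamily S k := by
  have hlive : {x | live (fun _ => XVal.star) x} = ∅ := by
    ext y
    simp [live]
  refine ⟨by simp [hlive], by simp [hlive], ?_⟩
  rintro ⟨t, hv, hr, htw, hf, -⟩
  refine h ⟨t, ⟨hv, Finset.eq_empty_of_forall_notMem fun l hl => ?_⟩, hr, htw⟩
  exact falsifyingVal_ne_star l.2 (hf l hl).symm

lemma not_xFalsifies (hw : ∀ C ∈ S, C.card ≤ k) (hα : α ∈ unrefutedFamily S k)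
    {C : Clause} (hC : C ∈ S) : ¬ XFalsifies α C :=
  fun hf => hα.2.2 ⟨.leaf C, hC, trivial, hw C hC, hf, by simp [resolvedVars]⟩

lemma of_forgetOf (hα : α ∈ unrefutedFamily S k) (h : ForgetOf β α) :
    β ∈ unrefutedFamily S k := by
  obtain ⟨hfin, hcard, hnr⟩ := hα
  exact ⟨hfin.subset h.setOf_live_subset,
    (Set.ncard_le_ncard h.setOf_live_subset hfin).trans hcard,
    fun hβ => hnr (hβ.of_forgetOf h)⟩

lemma exists_extOf (hα : α ∈ unrefutedFamily S k) (hcard : {x | live α x}.ncard < k + 1)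
    {x : ℕ} (hx : α x = XVal.star) :
    ∃ β ∈ unrefutedFamily S k, ExtOf α β ∧ live β x := by
  obtain ⟨hfin, -, hnr⟩ := hα
  have hmem (b : Bool) (hb : ¬ NarrowRegularlyRefuted S k (α.update x (falsifyingVal b))) :
      α.update x (falsifyingVal b) ∈ unrefutedFamily S k :=
    ⟨(hfin.insert x).subset XAssign.setOf_live_update_subset,
      (XAssign.ncard_live_update_le hfin).trans (by omega), hb⟩
  by_contra! hnone
  have hrefuted (b : Bool) : NarrowRegularlyRefuted S k (α.update x (falsifyingVal b)) :=
    not_not.1 fun hb => hnone _ (hmem b hb) (XAssign.extOf_update hx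
      (XAssign.live_update_falsifyingVal b)) (XAssign.live_update_falsifyingVal b)
  exact hnr (NarrowRegularlyRefuted.of_update_falsifyingVal hx hfin (by omega)
    (hrefuted true) (hrefuted false))

end unrefutedFamily

theorem regular_extendible_family_of_no_narrow_regular_refutation_general
    (S : Set Clause) (k : ℕ) (hw : ∀ C ∈ S, C.card ≤ k)
    (h : ¬ HasRegularRefutationOfWidth S k) :
    ∃ A : Set XAssign, RegExtFamily S (k + 1) A :=
  ⟨unrefutedFamily S k, unrefutedFamily.star_mem h,
    fun _ hα _ hC => unrefutedFamily.not_xFalsifies hw hα hC,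
    fun _ hα => ⟨hα.1, hα.2.1⟩,
    fun _ hα _ hβ => unrefutedFamily.of_forgetOf hα hβ,
    fun _ hα hcard _ _ hx => unrefutedFamily.exists_extOf hα hcard hx⟩

/-- If Σ is unsatisfiable, w(Σ) ≤ k, and there is no regular resolution refutation of
Σ of width at most k, then there is a regular extendible (k+1)-family for Σ. -/
theorem regular_extendible_family_of_no_narrow_regular_refutation
    (S : Set Clause) (k : ℕ) (hU : Unsat S) (hw : ∀ C ∈ S, C.card ≤ k)
    (h : ¬ HasRegularRefutationOfWidth S k) :
    ∃ A : Set XAssign, RegExtFamily S (k + 1) A :=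
  regular_extendible_family_of_no_narrow_regular_refutation_general S k hw h
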